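/- Let A be an associative algebra over a field K, viewed as the standard Poisson algebra with the commutator bracket. Let f₁ : A → A be an associative derivation and f₀ : A → A a Lie derivation (with respect to the commutator). Then the compatibility condition f₁([x,a]) - [x, f₁(a)] = f₀(x)a - a f₀(x) for all a, x ∈ A holds if and only if the image of f₀ - f₁ is contained in the associative center Z(A). -/
import Mathlib

/-- For the standard Poisson algebra, an associative derivation
`f₁` and a Lie derivation `f₀` satisfy the quasi-Poisson 1-cocycle
compatibility condition iff the image of `f₀ - f₁` lies in the center. -/
theorem stmt_7 (K A : Type*) [Field K] [Ring A] [Algebra K A]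
    (f₁ f₀ : A →ₗ[K] A)
    (hf₁ : ∀ a b : A, f₁ (a * b) = f₁ a * b + a * f₁ b)
    (hf₀ : ∀ x y : A,
      f₀ (x * y - y * x) = (f₀ x * y - y * f₀ x) + (x * f₀ y - f₀ y * x)) :
    (∀ a x : A,
        f₁ (x * a - a * x) - (x * f₁ a - f₁ a * x) = f₀ x * a - a * f₀ x)
      ↔ (∀ x z : A, (f₀ x - f₁ x) * z = z * (f₀ x - f₁ x)) := by
  have key : ∀ a x : A,
      f₁ (x * a - a * x) - (x * f₁ a - f₁ a * x) = f₁ x * a - a * f₁ x := by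
    intro a x
    rw [map_sub, hf₁, hf₁]
    abel
  constructor
  · intro h x z
    have h3 : f₁ x * z - z * f₁ x = f₀ x * z - z * f₀ x :=
      (key z x).symm.trans (h z x)
    rw [sub_mul, mul_sub, sub_eq_sub_iff_sub_eq_sub]
    exact h3.symm
  · intro h a x
    rw [key a x]
    have h3 := h x a
    rw [sub_mul, mul_sub, sub_eq_sub_iff_sub_eq_sub] at h3
    exact h3.symm
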